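/- arXiv:2203.05892 — 5 statements merged into one kernel-verified Lean document; each statement's English description precedes it below -/
import Mathlib

section
/- Fix n ∈ ℕ, n ≥ 1, and let r ∈ ℕ with r ≥ n. Then there exist real coefficients g_α for α ∈ ℕ^n_r with g_0 = 1 such that the kernel K_r(x,y) = Σ_{α ∈ ℕ^n_r} 2^{H(α)} g_α T_α(x) T_α(y) is nonnegative for all x, y ∈ [−1,1]^n and Σ_{i=1}^n (1 − g_{e_i}) ≤ n (1 − cos(nπ/(r+n))), where e_i is the i-th standard unit vector. Consequently the minimal resolution σ_r² over such nonnegative kernels satisfies σ_r² ≤ n(1 − cos(nπ/(r+n))) = O(n³/r²). -/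
/-!
Take `d = ⌊r/n⌋`, `θ = π/(d+2)` and the one-dimensional coefficients `c_k = a_k / a_0`, where
`a_k = ∑_l u_l u_{l+k}` is the autocorrelation of `u_l = sin((l+1)θ)`, `0 ≤ l ≤ d`, and let
`g_α = ∏ᵢ c_{αᵢ}`. Since `∑_k ε_k a_k cos(kt) = |∑_l u_l e^{ilt}|²` (`ε_0 = 1`, `ε_k = 2`),
the product-to-sum formula writes the one-dimensional kernel at `x = cos φ`, `y = cos ψ` as the
mean of two such squares at `t = φ ∓ ψ`; the `n`-dimensional kernel is a product of these and has
degree `n d ≤ r`. The sequence `u` solves `u_{l-1} + u_{l+1} = 2 cos θ · u_l` with zero boundary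
values, whence `a_1 = cos θ · a_0`, i.e. `g_{eᵢ} = cos(π/(d+2)) ≥ cos(nπ/(r+n))`.
-/

open MeasureTheory Real Finset

noncomputable section

/-- The Chebyshev (arcsine) measure on ℝ, supported on [-1,1]. -/
def chebMeasure1 : Measure ℝ :=
  (volume.restrict (Set.Icc (-1 : ℝ) 1)).withDensity
    (fun x => ENNReal.ofReal ((π * Real.sqrt (1 - x ^ 2))⁻¹))

/-- The product Chebyshev measure on [-1,1]^n. -/
def chebMeasure (n : ℕ) : Measure (Fin n → ℝ) := Measure.pi fun _ => chebMeasure1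

/-- The hypercube [-1,1]^n. -/
def box (n : ℕ) : Set (Fin n → ℝ) := Set.univ.pi fun _ => Set.Icc (-1 : ℝ) 1

/-- Euclidean norm on ℝ^n. -/
def eNorm {n : ℕ} (x : Fin n → ℝ) : ℝ := Real.sqrt (∑ i, x i ^ 2)

/-- Chebyshev polynomial of the first kind, evaluated. -/
def T1 (k : ℕ) (x : ℝ) : ℝ := (Polynomial.Chebyshev.T ℝ (k : ℤ)).eval x

/-- Multivariate Chebyshev polynomial. -/
def Tm {n : ℕ} (α : Fin n → ℕ) (x : Fin n → ℝ) : ℝ := ∏ i, T1 (α i) (x i)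

/-- The set ℕ^n_r of multi-indices of total degree at most r, as a finset. -/
def Nnr (n r : ℕ) : Finset (Fin n → ℕ) :=
  (Fintype.piFinset fun _ => Finset.range (r + 1)).filter fun α => ∑ i, α i ≤ r

/-- Hamming weight: number of nonzero entries. -/
def ham {n : ℕ} (α : Fin n → ℕ) : ℕ := (Finset.univ.filter fun i => α i ≠ 0).card

/-- Modulus of continuity of `f` on the set `S`, w.r.t. the Euclidean norm. -/
def modCont {n : ℕ} (f : (Fin n → ℝ) → ℝ) (S : Set (Fin n → ℝ)) (δ : ℝ) : ℝ :=
  sSup {t : ℝ | ∃ x ∈ S, ∃ y ∈ S, eNorm (x - y) ≤ δ ∧ t = |f x - f y|}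

namespace ChebyshevKernel

def chebWeight (k : ℕ) : ℝ := if k = 0 then 1 else 2

def autocorr (u : ℕ → ℝ) (N k : ℕ) : ℝ := ∑ l ∈ range (N - k), u l * u (l + k)

lemma autocorr_succ (u : ℕ → ℝ) {N k : ℕ} (hk : k ≤ N) :
    autocorr u (N + 1) k = autocorr u N k + u (N - k) * u N := by
  rw [autocorr, autocorr, Nat.sub_add_comm hk, sum_range_succ, Nat.sub_add_cancel hk]

lemma autocorr_of_le (u : ℕ → ℝ) {N k : ℕ} (hk : N ≤ k) : autocorr u N k = 0 := by
  rw [autocorr, Nat.sub_eq_zero_of_le hk, sum_range_zero]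

lemma autocorr_zero_pos (u : ℕ → ℝ) {N : ℕ} (hN : 0 < N) (hu : u 0 ≠ 0) :
    0 < autocorr u N 0 := by
  obtain ⟨M, rfl⟩ := Nat.exists_eq_add_of_lt hN
  rw [autocorr, Nat.sub_zero, zero_add, sum_range_succ']
  have : 0 ≤ ∑ l ∈ range M, u (l + 1) * u (l + 1 + 0) := sum_nonneg fun l _ => mul_self_nonneg _
  have : 0 < u 0 * u 0 := mul_self_pos.mpr hu
  linarith

lemma sum_chebWeight_mul_cos_sub (u : ℕ → ℝ) (t : ℝ) (N : ℕ) :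
    ∑ k ∈ range (N + 1), chebWeight k * u (N - k) * cos (k * t)
      = u N + 2 * ∑ j ∈ range N, u j * cos ((N - j : ℝ) * t) := by
  rw [← sum_range_reflect (fun k => chebWeight k * u (N - k) * cos (k * t)), sum_range_succ,
    add_comm, mul_sum]
  congr 1
  · simp [chebWeight]
  · refine sum_congr rfl fun j hj => ?_
    have hj := mem_range.mp hj
    rw [add_tsub_cancel_right, chebWeight, if_neg (by omega), Nat.sub_sub_self hj.le,
      Nat.cast_sub hj.le]
    ring

lemma sum_chebWeight_mul_autocorr_mul_cos (u : ℕ → ℝ) (t : ℝ) (N : ℕ) :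
    ∑ k ∈ range N, chebWeight k * autocorr u N k * cos (k * t)
      = (∑ j ∈ range N, u j * cos (j * t)) ^ 2 + (∑ j ∈ range N, u j * sin (j * t)) ^ 2 := by
  induction N with
  | zero => simp
  | succ N ih =>
    have hsplit : ∑ k ∈ range (N + 1), chebWeight k * autocorr u (N + 1) k * cos (k * t)
        = ∑ k ∈ range N, chebWeight k * autocorr u N k * cos (k * t)
          + u N * ∑ k ∈ range (N + 1), chebWeight k * u (N - k) * cos (k * t) := by
      have hterm : ∀ k ∈ range (N + 1), chebWeight k * autocorr u (N + 1) k * cos (k * t)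
          = chebWeight k * autocorr u N k * cos (k * t)
            + u N * (chebWeight k * u (N - k) * cos (k * t)) := by
        intro k hk
        rw [autocorr_succ u (Nat.lt_succ_iff.mp (mem_range.mp hk))]
        ring
      rw [sum_congr rfl hterm, sum_add_distrib, sum_range_succ _ N, autocorr_of_le u le_rfl,
        mul_sum]
      simp
    have hcross : (∑ j ∈ range N, u j * cos (j * t)) * cos (N * t)
        + (∑ j ∈ range N, u j * sin (j * t)) * sin (N * t)
        = ∑ j ∈ range N, u j * cos ((N - j : ℝ) * t) := by
      rw [sum_mul, sum_mul, ← sum_add_distrib]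
      refine sum_congr rfl fun j _ => ?_
      rw [sub_mul, cos_sub]
      ring
    rw [hsplit, ih, sum_chebWeight_mul_cos_sub, sum_range_succ, sum_range_succ, ← hcross]
    linear_combination (-u N ^ 2) * sin_sq_add_cos_sq ((N : ℝ) * t)

lemma T1_cos (k : ℕ) (θ : ℝ) : T1 k (cos θ) = cos (k * θ) := by
  rw [T1, Polynomial.Chebyshev.T_real_cos, Int.cast_natCast]

lemma sum_chebWeight_mul_autocorr_mul_T1_nonneg (u : ℕ → ℝ) (N : ℕ) {x y : ℝ}
    (hx : x ∈ Set.Icc (-1 : ℝ) 1) (hy : y ∈ Set.Icc (-1 : ℝ) 1) :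
    0 ≤ ∑ k ∈ range N, chebWeight k * autocorr u N k * (T1 k x * T1 k y) := by
  rw [← cos_arccos hx.1 hx.2, ← cos_arccos hy.1 hy.2]
  set θ := arccos x
  set φ := arccos y
  have hsum : 2 * ∑ k ∈ range N, chebWeight k * autocorr u N k * (T1 k (cos θ) * T1 k (cos φ))
      = ∑ k ∈ range N, chebWeight k * autocorr u N k * cos (k * (θ - φ))
        + ∑ k ∈ range N, chebWeight k * autocorr u N k * cos (k * (θ + φ)) := by
    rw [mul_sum, ← sum_add_distrib]
    refine sum_congr rfl fun k _ => ?_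
    rw [T1_cos, T1_cos, mul_sub, mul_add, cos_sub, cos_add]
    ring
  rw [sum_chebWeight_mul_autocorr_mul_cos, sum_chebWeight_mul_autocorr_mul_cos] at hsum
  have : 0 ≤ 2 * ∑ k ∈ range N, chebWeight k * autocorr u N k * (T1 k (cos θ) * T1 k (cos φ)) := by
    rw [hsum]
    positivity
  linarith

lemma autocorr_one_eq_of_recurrence (v : ℕ → ℝ) (c : ℝ) (N : ℕ) (h0 : v 0 = 0)
    (hN : v (N + 1) = 0) (hrec : ∀ j, v j + v (j + 2) = 2 * c * v (j + 1)) :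
    autocorr (fun l => v (l + 1)) N 1 = c * autocorr (fun l => v (l + 1)) N 0 := by
  cases N with
  | zero => simp [autocorr]
  | succ M =>
    simp only [autocorr, Nat.add_sub_cancel, Nat.sub_zero, add_zero]
    have hup : ∑ l ∈ range (M + 1), v (l + 1) * v (l + 2)
        = ∑ l ∈ range M, v (l + 1) * v (l + 2) := by
      rw [sum_range_succ, hN, mul_zero, add_zero]
    have hdown : ∑ l ∈ range (M + 1), v (l + 1) * v l = ∑ l ∈ range M, v (l + 1) * v (l + 2) := by
      rw [sum_range_succ', h0, mul_zero, add_zero]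
      exact sum_congr rfl fun l _ => mul_comm _ _
    have hmid : 2 * c * ∑ l ∈ range (M + 1), v (l + 1) * v (l + 1)
        = ∑ l ∈ range (M + 1), v (l + 1) * v l + ∑ l ∈ range (M + 1), v (l + 1) * v (l + 2) := by
      rw [mul_sum, ← sum_add_distrib]
      refine sum_congr rfl fun l _ => ?_
      linear_combination (-v (l + 1)) * hrec l
    linarith

def jacksonAutocorr (d k : ℕ) : ℝ :=
  autocorr (fun l => sin ((l + 1 : ℕ) * (π / (d + 2)))) (d + 1) k

def jacksonCoeff (d k : ℕ) : ℝ := jacksonAutocorr d k / jacksonAutocorr d 0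

lemma jacksonAutocorr_zero_pos (d : ℕ) : 0 < jacksonAutocorr d 0 := by
  refine autocorr_zero_pos _ d.succ_pos (sin_pos_of_pos_of_lt_pi ?_ ?_).ne'
  · positivity
  · rw [Nat.cast_one, one_mul, div_lt_iff₀ (by positivity)]
    nlinarith [pi_pos, (Nat.cast_nonneg d : (0 : ℝ) ≤ d)]

lemma jacksonAutocorr_one (d : ℕ) :
    jacksonAutocorr d 1 = cos (π / (d + 2)) * jacksonAutocorr d 0 := by
  refine autocorr_one_eq_of_recurrence (fun j => sin (j * (π / (d + 2)))) _ _ ?_ ?_ fun j => ?_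
  · simp
  · rw [show ((d + 1 + 1 : ℕ) : ℝ) * (π / (d + 2)) = π by push_cast; field_simp; ring, sin_pi]
  · push_cast
    rw [show ((j : ℝ) + 2) * (π / (d + 2)) = (j + 1) * (π / (d + 2)) + π / (d + 2) by ring,
      show (j : ℝ) * (π / (d + 2)) = (j + 1) * (π / (d + 2)) - π / (d + 2) by ring,
      sin_add, sin_sub]
    ring

lemma jacksonCoeff_zero (d : ℕ) : jacksonCoeff d 0 = 1 :=
  div_self (jacksonAutocorr_zero_pos d).ne'

lemma jacksonCoeff_one (d : ℕ) : jacksonCoeff d 1 = cos (π / (d + 2)) := by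
  rw [jacksonCoeff, jacksonAutocorr_one, mul_div_assoc, div_self (jacksonAutocorr_zero_pos d).ne',
    mul_one]

lemma jacksonCoeff_of_lt {d k : ℕ} (hk : d < k) : jacksonCoeff d k = 0 := by
  rw [jacksonCoeff, jacksonAutocorr, autocorr_of_le _ hk, zero_div]

lemma jacksonKernel_nonneg (d : ℕ) {x y : ℝ} (hx : x ∈ Set.Icc (-1 : ℝ) 1)
    (hy : y ∈ Set.Icc (-1 : ℝ) 1) :
    0 ≤ ∑ k ∈ range (d + 1), chebWeight k * jacksonCoeff d k * (T1 k x * T1 k y) := by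
  simp_rw [jacksonCoeff, mul_div_assoc', div_mul_eq_mul_div, ← sum_div]
  exact div_nonneg (sum_chebWeight_mul_autocorr_mul_T1_nonneg _ _ hx hy)
    (jacksonAutocorr_zero_pos d).le

lemma two_pow_ham_eq_prod_chebWeight {n : ℕ} (α : Fin n → ℕ) :
    (2 : ℝ) ^ ham α = ∏ i, chebWeight (α i) := by
  rw [ham, ← prod_const, prod_filter]
  refine prod_congr rfl fun i _ => ?_
  by_cases h : α i = 0 <;> simp [chebWeight, h]

lemma sum_Nnr_prod_eq_prod_sum {n r d : ℕ} (hd : n * d ≤ r) (F : Fin n → ℕ → ℝ)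
    (hF : ∀ i k, d < k → F i k = 0) :
    ∑ α ∈ Nnr n r, ∏ i, F i (α i) = ∏ i, ∑ k ∈ range (d + 1), F i k := by
  rw [prod_univ_sum]
  refine (sum_subset (fun α hα => ?_) fun α _ hα => ?_).symm
  · have hle : ∀ i, α i ≤ d := fun i =>
      Nat.lt_succ_iff.mp (mem_range.mp (Fintype.mem_piFinset.mp hα i))
    have hsum : ∑ i, α i ≤ r :=
      (sum_le_sum fun i _ => hle i).trans (by simpa using hd)
    simp only [Nnr, mem_filter, Fintype.mem_piFinset, mem_range]
    exact ⟨fun i => Nat.lt_succ_of_le ((single_le_sum (fun j _ => Nat.zero_le (α j))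
      (mem_univ i)).trans hsum), hsum⟩
  · obtain ⟨i, hi⟩ : ∃ i, d < α i := by simpa [Fintype.mem_piFinset] using hα
    exact prod_eq_zero (mem_univ i) (hF i _ hi)

lemma jacksonProductKernel_nonneg {n r d : ℕ} (hd : n * d ≤ r) {x y : Fin n → ℝ}
    (hx : x ∈ box n) (hy : y ∈ box n) :
    0 ≤ ∑ α ∈ Nnr n r, (2 : ℝ) ^ ham α * (∏ i, jacksonCoeff d (α i)) * Tm α x * Tm α y := by
  have hfactor : ∀ α : Fin n → ℕ,
      (2 : ℝ) ^ ham α * (∏ i, jacksonCoeff d (α i)) * Tm α x * Tm α y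
        = ∏ i, chebWeight (α i) * jacksonCoeff d (α i) * (T1 (α i) (x i) * T1 (α i) (y i)) := by
    intro α
    simp only [two_pow_ham_eq_prod_chebWeight, Tm, ← prod_mul_distrib]
    exact prod_congr rfl fun i _ => by ring
  rw [sum_congr rfl fun α _ => hfactor α, sum_Nnr_prod_eq_prod_sum hd
    (fun i k => chebWeight k * jacksonCoeff d k * (T1 k (x i) * T1 k (y i))) fun i k hk => by
      rw [jacksonCoeff_of_lt hk, mul_zero, zero_mul]]
  exact prod_nonneg fun i _ => jacksonKernel_nonneg d (hx i trivial) (hy i trivial)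

lemma prod_jacksonCoeff_single {n : ℕ} (d : ℕ) (i : Fin n) :
    ∏ j, jacksonCoeff d ((Pi.single i 1 : Fin n → ℕ) j) = cos (π / (d + 2)) := by
  rw [prod_eq_single i (fun j _ hj => by rw [Pi.single_eq_of_ne hj, jacksonCoeff_zero])
    (by simp), Pi.single_eq_same, jacksonCoeff_one]

lemma cos_le_cos_pi_div_div_add_two {n : ℕ} (r : ℕ) (hn : 0 < n) :
    cos (n * π / (r + n)) ≤ cos (π / ((r / n : ℕ) + 2)) := by
  have hr : (r : ℝ) + n ≤ n * ((r / n : ℕ) + 2) := by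
    have : r + n ≤ n * (r / n + 2) := by nlinarith [Nat.lt_mul_div_succ r hn]
    exact_mod_cast this
  have hn' : (0 : ℝ) < n := by exact_mod_cast hn
  apply cos_le_cos_of_nonneg_of_le_pi (by positivity)
  · rw [div_le_iff₀ (by positivity)]
    nlinarith [pi_pos, (Nat.cast_nonneg r : (0 : ℝ) ≤ r)]
  · rw [div_le_div_iff₀ (by positivity) (by positivity)]
    nlinarith [pi_pos]

end ChebyshevKernel

theorem exists_kernel_resolution_bound_general (n r : ℕ) (hn : 1 ≤ n) :
    ∃ g : (Fin n → ℕ) → ℝ, g 0 = 1 ∧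
      (∀ x ∈ box n, ∀ y ∈ box n,
        0 ≤ ∑ α ∈ Nnr n r, (2 : ℝ) ^ ham α * g α * Tm α x * Tm α y) ∧
      ∑ i : Fin n, (1 - g (Pi.single i 1)) ≤
        n * (1 - Real.cos (n * π / (r + n))) := by
  refine ⟨fun α => ∏ i, ChebyshevKernel.jacksonCoeff (r / n) (α i),
    by simp [ChebyshevKernel.jacksonCoeff_zero],
    fun x hx y hy => ChebyshevKernel.jacksonProductKernel_nonneg (Nat.mul_div_le r n) hx hy, ?_⟩
  simp only [ChebyshevKernel.prod_jacksonCoeff_single, sum_const, card_univ, Fintype.card_fin,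
    nsmul_eq_mul]
  gcongr
  exact ChebyshevKernel.cos_le_cos_pi_div_div_add_two r hn

/-- For r ≥ n there exist coefficients `g` with `g 0 = 1` whose kernel
is nonnegative on the hypercube and whose squared resolution Σᵢ (1 − g_{eᵢ}) is at most
n(1 − cos(nπ/(r+n))). -/
theorem exists_kernel_resolution_bound (n r : ℕ) (hn : 1 ≤ n) (hr : n ≤ r) :
    ∃ g : (Fin n → ℕ) → ℝ, g 0 = 1 ∧
      (∀ x ∈ box n, ∀ y ∈ box n,
        0 ≤ ∑ α ∈ Nnr n r, (2 : ℝ) ^ ham α * g α * Tm α x * Tm α y) ∧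
      ∑ i : Fin n, (1 - g (Pi.single i 1)) ≤
        n * (1 - Real.cos (n * π / (r + n))) :=
  exists_kernel_resolution_bound_general n r hn
end
end

section
/- For every r ∈ ℕ, the minimum of Σ_{k=0}^r a_k² − Σ_{k=0}^{r−1} a_k a_{k+1} over all a = (a_0, …, a_r) ∈ ℝ^{r+1} with Σ_{k=0}^r a_k² = 1 equals 1 − cos(π/(r+2)). In particular, for every unit vector a ∈ ℝ^{r+1} one has Σ_{k=0}^{r−1} a_k a_{k+1} ≤ cos(π/(r+2)), and this bound is attained. -/
open MeasureTheory Real Finset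

noncomputable section

/-!
The extremal vector is `a k = sin ((k + 1) θ)` with `θ = π / (r + 2)`: the sequence
`s k = sin (k θ)` vanishes at `k = 0` and `k = r + 2`, is positive in between, and satisfies
`s (k + 2) + s k = 2 cos θ · s (k + 1)`, i.e. `s (· + 1)` is an eigenvector of the path adjacency
matrix with eigenvalue `2 cos θ`. For the upper bound on `∑ a k a (k + 1)`, bound each product by
the weighted AM-GM inequality `2 x y ≤ (q / p) x² + (p / q) y²` with weights `p, q` consecutive
values of `s`; by the recurrence the weights collected by each `a k ²` add up to `2 cos θ`.
-/

theorem two_mul_mul_le_div_mul_sq_add_div_mul_sq {p q : ℝ} (hp : 0 < p) (hq : 0 < q)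
    (x y : ℝ) : 2 * x * y ≤ q / p * x ^ 2 + p / q * y ^ 2 := by
  have key : q / p * x ^ 2 + p / q * y ^ 2 - 2 * x * y = (q * x - p * y) ^ 2 / (p * q) := by
    field_simp; ring
  have : 0 ≤ (q * x - p * y) ^ 2 / (p * q) := by positivity
  linarith

section SecondOrderRecurrence

variable {s : ℕ → ℝ} {c : ℝ}

theorem two_mul_sum_mul_succ_add_le (hrec : ∀ m, s (m + 2) + s m = 2 * c * s (m + 1))
    (hs0 : s 0 = 0) (a : ℕ → ℝ) {m : ℕ} (hpos : ∀ k ≤ m, 0 < s (k + 1)) :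
    2 * ∑ k ∈ range m, a k * a (k + 1) + s (m + 2) / s (m + 1) * a m ^ 2
      ≤ 2 * c * ∑ k ∈ range (m + 1), a k ^ 2 := by
  induction m with
  | zero =>
    have h2 : s 2 = 2 * c * s 1 := by simpa [hs0] using hrec 0
    have h1 : s 1 ≠ 0 := (hpos 0 le_rfl).ne'
    simp [h2, h1]
  | succ n ih =>
    have hp := hpos n (by omega)
    have hq := hpos (n + 1) le_rfl
    have hratio : s (n + 3) / s (n + 2) = 2 * c - s (n + 1) / s (n + 2) := by
      rw [eq_sub_iff_add_eq, ← add_div, hrec (n + 1), mul_div_assoc, div_self hq.ne', mul_one]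
    have amgm := two_mul_mul_le_div_mul_sq_add_div_mul_sq hp hq (a n) (a (n + 1))
    have ih := ih fun k hk => hpos k (by omega)
    rw [sum_range_succ, sum_range_succ _ (n + 1), show n + 1 + 2 = n + 3 from rfl, hratio]
    linarith

theorem two_mul_sum_mul_succ_add_eq (hrec : ∀ m, s (m + 2) + s m = 2 * c * s (m + 1))
    (hs0 : s 0 = 0) (m : ℕ) :
    2 * ∑ k ∈ range m, s (k + 1) * s (k + 2) + s (m + 1) * s (m + 2)
      = 2 * c * ∑ k ∈ range (m + 1), s (k + 1) ^ 2 := by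
  induction m with
  | zero =>
    rw [sum_range_zero, sum_range_one]
    linear_combination s 1 * hrec 0 - s 1 * hs0
  | succ n ih =>
    rw [sum_range_succ, sum_range_succ _ (n + 1)]
    linear_combination ih + s (n + 2) * hrec (n + 1)

end SecondOrderRecurrence

theorem exists_sum_sq_eq_one_sum_mul_succ_eq {a : ℕ → ℝ} {n m : ℕ} {c : ℝ}
    (hS : 0 < ∑ k ∈ range n, a k ^ 2)
    (h : ∑ k ∈ range m, a k * a (k + 1) = c * ∑ k ∈ range n, a k ^ 2) :
    ∃ b : ℕ → ℝ, ∑ k ∈ range n, b k ^ 2 = 1 ∧ ∑ k ∈ range m, b k * b (k + 1) = c := by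
  refine ⟨fun k => a k / √(∑ k ∈ range n, a k ^ 2), ?_, ?_⟩
  · simp_rw [div_pow, sq_sqrt hS.le]
    rw [← sum_div, div_self hS.ne']
  · simp_rw [div_mul_div_comm, mul_self_sqrt hS.le]
    rw [← sum_div, h, mul_div_assoc, div_self hS.ne', mul_one]

theorem sin_nat_mul_recurrence (θ : ℝ) (m : ℕ) :
    sin ((m + 2 : ℕ) * θ) + sin (m * θ) = 2 * cos θ * sin ((m + 1 : ℕ) * θ) := by
  have h := sin_add (((m : ℝ) + 1) * θ) θ
  have h' := sin_sub (((m : ℝ) + 1) * θ) θ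
  push_cast
  rw [show ((m : ℝ) + 2) * θ = (m + 1) * θ + θ by ring,
    show (m : ℝ) * θ = (m + 1) * θ - θ by ring, h, h']
  ring

theorem sin_nat_mul_pi_div_pos {k n : ℕ} (hk : 0 < k) (hkn : k < n) :
    0 < sin (k * (π / n)) := by
  have hn : (0 : ℝ) < n := by exact_mod_cast hk.trans hkn
  apply sin_pos_of_pos_of_lt_pi (by positivity)
  rw [mul_div_assoc', div_lt_iff₀ hn, mul_comm]
  exact mul_lt_mul_of_pos_left (by exact_mod_cast hkn) pi_pos

/-- The minimum of Σ aₖ² − Σ aₖaₖ₊₁ over unit vectors (a₀,…,a_r)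
equals 1 − cos(π/(r+2)); equivalently Σ aₖaₖ₊₁ ≤ cos(π/(r+2)) with equality attained. -/
theorem jackson_optimization_value (r : ℕ) :
    IsLeast
      {t : ℝ | ∃ a : ℕ → ℝ, (∑ k ∈ Finset.range (r + 1), a k ^ 2) = 1 ∧
        t = (∑ k ∈ Finset.range (r + 1), a k ^ 2)
          - ∑ k ∈ Finset.range r, a k * a (k + 1)}
      (1 - Real.cos (π / (r + 2))) := by
  set θ := π / ((r + 2 : ℕ) : ℝ)
  have hθ : π / (r + 2) = θ := by simp [θ]
  set s : ℕ → ℝ := fun k => sin (k * θ)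
  have hrec : ∀ m, s (m + 2) + s m = 2 * cos θ * s (m + 1) := sin_nat_mul_recurrence θ
  have hs0 : s 0 = 0 := by simp [s]
  have hend : s (r + 2) = 0 := by
    simp only [s, θ]
    rw [mul_div_cancel₀ _ (by positivity), sin_pi]
  have hpos : ∀ k ≤ r, 0 < s (k + 1) := fun k hk =>
    sin_nat_mul_pi_div_pos k.succ_pos (by omega)
  rw [hθ]
  constructor
  · have hS : 0 < ∑ k ∈ range (r + 1), s (k + 1) ^ 2 :=
      sum_pos (fun k hk => pow_pos (hpos k (Nat.lt_succ_iff.mp (mem_range.mp hk))) 2)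
        ⟨0, by simp⟩
    have hext := two_mul_sum_mul_succ_add_eq hrec hs0 r
    rw [hend, mul_zero, add_zero] at hext
    obtain ⟨b, hb1, hbc⟩ := exists_sum_sq_eq_one_sum_mul_succ_eq (a := fun k => s (k + 1)) hS
      (c := cos θ) (by linarith)
    exact ⟨b, hb1, by rw [hb1, hbc]⟩
  · rintro t ⟨a, ha, rfl⟩
    have hle := two_mul_sum_mul_succ_add_le hrec hs0 a hpos
    rw [hend, zero_div, zero_mul, add_zero, ha] at hle
    rw [ha]
    linarith
end
end

section
/- For r ∈ ℕ define the coefficients g_{k,r}^{KPM} = [(r−k+2) cos(πk/(r+2)) + sin(πk/(r+2)) cot(π/(r+2))]/(r+2) for 0 ≤ k ≤ r. Then g_{0,r}^{KPM} = 1, g_{1,r}^{KPM} = cos(π/(r+2)) (so the resolution satisfies σ_r² = g_{0,r}^{KPM} − g_{1,r}^{KPM} = 1 − cos(π/(r+2))), and the kernel K_r^{KPM}(x,y) = 1 + 2 Σ_{k=1}^r g_{k,r}^{KPM} T_k(x) T_k(y) is nonnegative for all x, y ∈ [−1,1]. -/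
open MeasureTheory Real Finset

noncomputable section

/-!
Write `s = π/(r+2)` and `b m = sin ((m+1) s)`. The KPM coefficients are, up to the factor
`(r+2)/2`, the autocorrelations `∑ₘ b m * b (m+k)` of this sine sequence (a telescoping
product-to-sum computation, using `(r+2) s = π`). Hence
`1 + 2 ∑ₖ gₖ cos (k t)` is a positive multiple of `|∑ₘ b m e^{imt}|²` and is nonnegative.
With `x = cos θ`, `y = cos φ` the kernel is the average of this cosine sum at `t = θ - φ` and
`t = θ + φ`.
-/

theorem sum_range_sum_range_eq_diag_add_two_mul_lower (F : ℕ → ℕ → ℝ)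
    (hF : ∀ i j, F i j = F j i) (n : ℕ) :
    ∑ i ∈ range n, ∑ j ∈ range n, F i j
      = ∑ i ∈ range n, F i i + 2 * ∑ i ∈ range n, ∑ j ∈ range i, F i j := by
  induction n with
  | zero => simp
  | succ n ih =>
    simp only [sum_range_succ, sum_add_distrib, ih, sum_congr rfl fun i _ => hF i n]
    ring

theorem sum_range_sum_range_lt_eq_sum_lag (F : ℕ → ℕ → ℝ) (n : ℕ) :
    ∑ i ∈ range (n + 1), ∑ j ∈ range i, F i j
      = ∑ k ∈ Icc 1 n, ∑ m ∈ range (n + 1 - k), F (m + k) m := by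
  rw [sum_sigma', sum_sigma']
  refine sum_nbij' (fun p => ⟨p.1 - p.2, p.2⟩) (fun q => ⟨q.2 + q.1, q.2⟩) ?_ ?_ ?_ ?_ ?_ <;>
    simp only [mem_sigma, mem_range, mem_Icc, Sigma.forall]
  · intro i j h; omega
  · intro k m h; omega
  · intro i j h; rw [Nat.add_sub_cancel' h.2.le]
  · intro k m _; rw [Nat.add_sub_cancel_left]
  · intro i j h; rw [Nat.add_sub_cancel' h.2.le]

theorem sq_add_sq_sum_cos_sum_sin (b : ℕ → ℝ) (n : ℕ) (t : ℝ) :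
    (∑ m ∈ range (n + 1), b m * cos (m * t)) ^ 2 + (∑ m ∈ range (n + 1), b m * sin (m * t)) ^ 2
      = ∑ m ∈ range (n + 1), b m ^ 2
        + 2 * ∑ k ∈ Icc 1 n, (∑ m ∈ range (n + 1 - k), b m * b (m + k)) * cos (k * t) := by
  set F : ℕ → ℕ → ℝ := fun i j => b i * b j * cos (i * t - j * t)
  have hsq : (∑ m ∈ range (n + 1), b m * cos (m * t)) ^ 2
      + (∑ m ∈ range (n + 1), b m * sin (m * t)) ^ 2
      = ∑ i ∈ range (n + 1), ∑ j ∈ range (n + 1), F i j := by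
    simp only [F, sq, sum_mul_sum, ← sum_add_distrib, cos_sub]
    refine sum_congr rfl fun i _ => sum_congr rfl fun j _ => ?_
    ring
  have hF : ∀ i j, F i j = F j i := fun i j => by
    simp only [F, ← cos_neg (i * t - j * t), neg_sub]; ring
  rw [hsq, sum_range_sum_range_eq_diag_add_two_mul_lower F hF,
    sum_range_sum_range_lt_eq_sum_lag]
  simp only [F, sub_self, cos_zero, mul_one, sum_mul, Nat.cast_add, add_mul, add_sub_cancel_left, sq]
  congr 2
  refine sum_congr rfl fun k _ => sum_congr rfl fun m _ => ?_
  ring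

theorem four_mul_sin_mul_sum_sin_mul_sin (s k : ℝ) (M : ℕ) :
    4 * sin s * ∑ m ∈ range M, sin ((m + 1) * s) * sin ((m + 1 + k) * s)
      = 2 * M * sin s * cos (k * s) + sin ((k + 1) * s) - sin ((2 * M + k + 1) * s) := by
  have hterm : ∀ m : ℕ, 4 * sin s * (sin ((m + 1) * s) * sin ((m + 1 + k) * s))
      = 2 * sin s * cos (k * s)
        - (sin ((2 * (m + 1 : ℕ) + k + 1) * s) - sin ((2 * m + k + 1) * s)) := fun m => by
    set u := (m + 1) * s
    set v := (m + 1 + k) * s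
    rw [show k * s = v - u by ring, show (2 * (m + 1 : ℕ) + k + 1) * s = u + v + s by
      push_cast; ring, show (2 * m + k + 1) * s = u + v - s by ring]
    simp only [sin_add, sin_sub, cos_add, cos_sub]
    ring
  rw [mul_sum, sum_congr rfl fun m _ => hterm m, sum_sub_distrib,
    sum_range_sub (fun m : ℕ => sin ((2 * m + k + 1) * s))]
  simp only [sum_const, card_range, nsmul_eq_mul, CharP.cast_eq_zero, mul_zero, zero_add]
  ring

theorem sin_pi_div_nat_add_two_pos (r : ℕ) : 0 < sin (π / (r + 2)) :=
  sin_pos_of_pos_of_lt_pi (by positivity) (div_lt_self pi_pos (by linarith [r.cast_nonneg (α := ℝ)]))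

def kpmCoeff (r k : ℕ) : ℝ :=
  (((r : ℝ) - k + 2) * cos (π * k / (r + 2)) + sin (π * k / (r + 2)) * cot (π / (r + 2))) / (r + 2)

theorem kpmCoeff_zero (r : ℕ) : kpmCoeff r 0 = 1 := by
  have : (r : ℝ) + 2 ≠ 0 := by positivity
  simp [kpmCoeff, this]

theorem kpmCoeff_one (r : ℕ) : kpmCoeff r 1 = cos (π / (r + 2)) := by
  have hsin := (sin_pi_div_nat_add_two_pos r).ne'
  simp only [kpmCoeff, Nat.cast_one, mul_one, cot_eq_cos_div_sin]
  field_simp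
  ring

def jacksonSine (r m : ℕ) : ℝ := sin ((m + 1) * (π / (r + 2)))

theorem sum_jacksonSine_mul_jacksonSine {r k : ℕ} (hk : k ≤ r) :
    ∑ m ∈ range (r + 1 - k), jacksonSine r m * jacksonSine r (m + k)
      = (r + 2) / 2 * kpmCoeff r k := by
  set s := π / (r + 2)
  have hr : (0 : ℝ) < r + 2 := by positivity
  have hsin : sin s ≠ 0 := (sin_pi_div_nat_add_two_pos r).ne'
  have hM : ((r + 1 - k : ℕ) : ℝ) = r + 1 - k := by rw [Nat.cast_sub (by omega)]; push_cast; ring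
  have hsum := four_mul_sin_mul_sum_sin_mul_sin s k (r + 1 - k)
  -- `(r+2) s = π`, so the boundary term `sin ((2M+k+1) s)` reflects to `-sin ((k+1) s)`
  rw [hM, show (2 * ((r : ℝ) + 1 - k) + k + 1) * s = 2 * π - (k + 1) * s by
    simp only [s]; field_simp; ring, sin_two_pi_sub] at hsum
  have hlhs : ∑ m ∈ range (r + 1 - k), jacksonSine r m * jacksonSine r (m + k)
      = ∑ m ∈ range (r + 1 - k), sin ((m + 1) * s) * sin ((m + 1 + k) * s) := by
    simp only [jacksonSine, Nat.cast_add, s, add_right_comm]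
  rw [hlhs, kpmCoeff, show π * k / (r + 2) = k * s by simp only [s]; ring,
    show π / ((r : ℝ) + 2) = s from rfl, cot_eq_cos_div_sin]
  rw [show ((k : ℝ) + 1) * s = k * s + s by ring, sin_add] at hsum
  refine mul_left_cancel₀ (mul_ne_zero four_ne_zero hsin) ?_
  rw [hsum]
  field_simp
  ring

theorem kpmCoeff_cos_sum_nonneg (r : ℕ) (t : ℝ) :
    0 ≤ 1 + 2 * ∑ k ∈ Icc 1 r, kpmCoeff r k * cos (k * t) := by
  have hr : (0 : ℝ) < (r + 2) / 2 := by positivity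
  have hsq := sq_add_sq_sum_cos_sum_sin (jacksonSine r) r t
  have hcoeff : ∀ k ∈ Icc 1 r, (∑ m ∈ range (r + 1 - k), jacksonSine r m * jacksonSine r (m + k))
      * cos (k * t) = (r + 2) / 2 * (kpmCoeff r k * cos (k * t)) := fun k hk => by
    rw [sum_jacksonSine_mul_jacksonSine (mem_Icc.mp hk).2, mul_assoc]
  have hdiag : ∑ m ∈ range (r + 1), jacksonSine r m ^ 2 = (r + 2) / 2 := by
    simpa [sq, kpmCoeff_zero] using sum_jacksonSine_mul_jacksonSine (Nat.zero_le r)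
  rw [sum_congr rfl hcoeff, ← mul_sum, hdiag] at hsq
  refine nonneg_of_mul_nonneg_right ?_ hr
  linarith [sq_nonneg (∑ m ∈ range (r + 1), jacksonSine r m * cos (m * t)),
    sq_nonneg (∑ m ∈ range (r + 1), jacksonSine r m * sin (m * t))]

theorem T1_eq_cos_mul_arccos (k : ℕ) {x : ℝ} (hx : x ∈ Set.Icc (-1 : ℝ) 1) :
    T1 k x = cos (k * arccos x) := by
  rw [T1, ← cos_arccos hx.1 hx.2, Polynomial.Chebyshev.T_real_cos, cos_arccos hx.1 hx.2]
  norm_cast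

theorem chebyshev_kernel_nonneg_of_cos_sum_nonneg (a : ℝ) (g : ℕ → ℝ) (S : Finset ℕ)
    (h : ∀ t, 0 ≤ a + 2 * ∑ k ∈ S, g k * cos (k * t)) {x y : ℝ}
    (hx : x ∈ Set.Icc (-1 : ℝ) 1) (hy : y ∈ Set.Icc (-1 : ℝ) 1) :
    0 ≤ a + 2 * ∑ k ∈ S, g k * T1 k x * T1 k y := by
  set θ := arccos x
  set φ := arccos y
  have havg : ∑ k ∈ S, g k * T1 k x * T1 k y
      = (∑ k ∈ S, g k * cos (k * (θ - φ)) + ∑ k ∈ S, g k * cos (k * (θ + φ))) / 2 := by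
    rw [← sum_add_distrib, sum_div]
    refine sum_congr rfl fun k _ => ?_
    rw [T1_eq_cos_mul_arccos k hx, T1_eq_cos_mul_arccos k hy, mul_sub, mul_add, cos_sub, cos_add]
    ring
  rw [havg]
  linarith [h (θ - φ), h (θ + φ)]

/-- Properties of the minimum-resolution (KPM "Jackson") coefficients:
g₀ = 1, g₁ = cos(π/(r+2)) (so σ_r² = g₀ − g₁ = 1 − cos(π/(r+2))), and the associated
Chebyshev kernel is nonnegative on [−1,1]². -/
theorem KPM_kernel_properties (r : ℕ) (g : ℕ → ℝ)
    (hg : ∀ k, g k = (((r : ℝ) - k + 2) * Real.cos (π * k / (r + 2))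
      + Real.sin (π * k / (r + 2)) * Real.cot (π / (r + 2))) / (r + 2)) :
    g 0 = 1 ∧ g 1 = Real.cos (π / (r + 2)) ∧
      g 0 - g 1 = 1 - Real.cos (π / (r + 2)) ∧
      ∀ x ∈ Set.Icc (-1 : ℝ) 1, ∀ y ∈ Set.Icc (-1 : ℝ) 1,
        0 ≤ 1 + 2 * ∑ k ∈ Finset.Icc 1 r, g k * T1 k x * T1 k y := by
  obtain rfl : g = kpmCoeff r := funext hg
  refine ⟨kpmCoeff_zero r, kpmCoeff_one r, by rw [kpmCoeff_zero, kpmCoeff_one], ?_⟩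
  intro x hx y hy
  exact chebyshev_kernel_nonneg_of_cos_sum_nonneg 1 _ _ (kpmCoeff_cos_sum_nonneg r) hx hy
end
end

section
/- Let g_α, α ∈ ℕ^n_r, be real numbers and suppose the trigonometric polynomial Φ(φ) = 1 + Σ_{α ∈ ℕ^n_r, α ≠ 0} 2^{H(α)} g_α ∏_{i=1}^n cos(α_i φ_i) satisfies Φ(φ) ≥ 0 for all φ ∈ ℝ^n. Then the polynomial kernel K(x,y) = 1 + Σ_{α ∈ ℕ^n_r, α ≠ 0} 2^{H(α)} g_α T_α(x) T_α(y) satisfies K(x,y) ≥ 0 for all x, y ∈ [−1,1]^n. -/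
open MeasureTheory Real Finset

noncomputable section

/-!
Writing `x = cos θ` and `y = cos ψ` coordinatewise, the product-to-sum formula gives
`T_α(x) T_α(y) = 2⁻ⁿ ∑_{ε ∈ {±1}ⁿ} ∏ᵢ cos (αᵢ (θᵢ + εᵢ ψᵢ))`, so the kernel `K(x, y)` is the average
of `Φ` over the `2ⁿ` points `θ + ε ψ`. The signs `ε` range over `ι → ℤˣ`.
-/

section CosineProducts

variable {ι : Type*} [Fintype ι] [DecidableEq ι]

lemma cos_mul_cos_eq_sum_units_int (u v : ℝ) :
    cos u * cos v = 2⁻¹ * ∑ s : ℤˣ, cos (u + (s : ℤ) * v) := by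
  simp only [UnitsInt.univ, Finset.sum_insert (by decide : (1 : ℤˣ) ∉ ({-1} : Finset ℤˣ)),
    Finset.sum_singleton, Units.val_one, Units.val_neg, Int.cast_one, Int.cast_neg, one_mul,
    neg_one_mul, cos_add, cos_neg, sin_neg]
  ring

lemma prod_cos_mul_prod_cos (u v : ι → ℝ) :
    (∏ i, cos (u i)) * ∏ i, cos (v i)
      = (2 ^ Fintype.card ι)⁻¹ * ∑ ε : ι → ℤˣ, ∏ i, cos (u i + (ε i : ℤ) * v i) := by
  simp only [← Finset.prod_mul_distrib, cos_mul_cos_eq_sum_units_int]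
  rw [Finset.prod_mul_distrib, Finset.prod_const, Finset.card_univ, inv_pow, Fintype.prod_sum]

lemma one_add_sum_prod_cos_mul_prod_cos (A : Finset (ι → ℕ)) (c : (ι → ℕ) → ℝ) (θ ψ : ι → ℝ) :
    1 + ∑ α ∈ A, c α * (∏ i, cos (α i * θ i)) * ∏ i, cos (α i * ψ i)
      = (2 ^ Fintype.card ι)⁻¹ * ∑ ε : ι → ℤˣ,
          (1 + ∑ α ∈ A, c α * ∏ i, cos (α i * (θ i + (ε i : ℤ) * ψ i))) := by
  have hcard : ((Fintype.card (ι → ℤˣ) : ℕ) : ℝ) = 2 ^ Fintype.card ι := by simp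
  rw [Finset.sum_add_distrib, Finset.sum_const, Finset.card_univ, nsmul_one, hcard, mul_add,
    inv_mul_cancel₀ (by positivity), Finset.sum_comm, Finset.mul_sum]
  congr 1
  refine Finset.sum_congr rfl fun α _ => ?_
  have hcos : ∀ (ε : ι → ℤˣ) i,
      (α i : ℝ) * θ i + (ε i : ℤ) * (α i * ψ i) = α i * (θ i + (ε i : ℤ) * ψ i) :=
    fun _ _ => by ring
  rw [mul_assoc, prod_cos_mul_prod_cos]
  simp only [hcos, Finset.mul_sum]
  exact Finset.sum_congr rfl fun _ _ => mul_left_comm _ _ _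

theorem one_add_sum_prod_cos_mul_prod_cos_nonneg {A : Finset (ι → ℕ)} {c : (ι → ℕ) → ℝ}
    (h : ∀ φ : ι → ℝ, 0 ≤ 1 + ∑ α ∈ A, c α * ∏ i, cos (α i * φ i)) (θ ψ : ι → ℝ) :
    0 ≤ 1 + ∑ α ∈ A, c α * (∏ i, cos (α i * θ i)) * ∏ i, cos (α i * ψ i) := by
  rw [one_add_sum_prod_cos_mul_prod_cos]
  exact mul_nonneg (by positivity) (Finset.sum_nonneg fun ε _ => h _)

end CosineProducts

lemma T1_cos (k : ℕ) (θ : ℝ) : T1 k (cos θ) = cos (k * θ) := by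
  simp [T1, Polynomial.Chebyshev.T_real_cos]

lemma Tm_eq_prod_cos_arccos {n : ℕ} (α : Fin n → ℕ) {x : Fin n → ℝ} (hx : x ∈ box n) :
    Tm α x = ∏ i, cos (α i * arccos (x i)) := by
  refine Finset.prod_congr rfl fun i _ => ?_
  obtain ⟨hx₁, hx₂⟩ := hx i (Set.mem_univ i)
  rw [← T1_cos, cos_arccos hx₁ hx₂]

/-- If the trigonometric polynomial
1 + Σ_{α≠0} 2^{H(α)} g_α ∏ᵢ cos(αᵢφᵢ) is nonnegative on ℝⁿ, then the Chebyshev kernel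
1 + Σ_{α≠0} 2^{H(α)} g_α T_α(x)T_α(y) is nonnegative on [−1,1]ⁿ × [−1,1]ⁿ. -/
theorem trig_nonneg_implies_kernel_nonneg (n r : ℕ) (g : (Fin n → ℕ) → ℝ)
    (hΦ : ∀ φ : Fin n → ℝ,
      0 ≤ 1 + ∑ α ∈ (Nnr n r).erase 0,
        (2 : ℝ) ^ ham α * g α * ∏ i, Real.cos (α i * φ i)) :
    ∀ x ∈ box n, ∀ y ∈ box n,
      0 ≤ 1 + ∑ α ∈ (Nnr n r).erase 0,
        (2 : ℝ) ^ ham α * g α * Tm α x * Tm α y := by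
  intro x hx y hy
  simp only [Tm_eq_prod_cos_arccos _ hx, Tm_eq_prod_cos_arccos _ hy]
  exact one_add_sum_prod_cos_mul_prod_cos_nonneg hΦ _ _
end
end

section
/- Let r ≥ 1, let μ be the product Chebyshev measure on [−1,1]^n, and let K_r(x,y) = Σ_{α ∈ ℕ^n_r} 2^{H(α)} g_α T_α(x) T_α(y) with real coefficients g_α and g_0 = 1 (the coefficient of α = 0). Then ∫_{[−1,1]^n} K_r(x,y) dμ(y) = 1 for every x, and the squared resolution satisfies ∫_{[−1,1]^n × [−1,1]^n} ‖x−y‖² K_r(x,y) dμ(x) dμ(y) = Σ_{i=1}^n (1 − g_{e_i}), where e_i is the i-th standard unit vector. -/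
/-!
The Chebyshev measure is, up to the factor `π`, the measure `measureT` of Mathlib,
for which the `T_k` are orthogonal; by Fubini the `T_α` are orthogonal for `μ` with
`∫ T_α² dμ = 2^{-H(α)}`. Since `T_0 = 1`, integrating `K(x, ·)` keeps only `α = 0`.
For the resolution, expand `‖x - y‖² = ∑ᵢ (xᵢ - yᵢ)²`; for each `α` the integral of
`(xᵢ - yᵢ)² T_α(x) T_α(y)` over `μ ⊗ μ` splits into products of one-variable integrals,
`2 (∫ xᵢ² T_α · ∫ T_α - (∫ xᵢ T_α)²)`, and as `xᵢ = T_{eᵢ}` only `α = 0` and `α = eᵢ` survive,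
contributing `1` and `-g_{eᵢ}`.
-/

open MeasureTheory Real Finset

noncomputable section

open Polynomial.Chebyshev

lemma chebMeasure1_eq_smul_measureT : chebMeasure1 = ENNReal.ofReal π⁻¹ • measureT := by
  rw [chebMeasure1, measureT, restrict_withDensity measurableSet_Ioc,
    Measure.restrict_congr_set Ioc_ae_eq_Icc, ← withDensity_smul' _ _ ENNReal.ofReal_ne_top]
  congr 1
  funext x
  rw [Pi.smul_apply, smul_eq_mul, ← ENNReal.ofReal_coe_nnreal, NNReal.coe_mk,
    ← ENNReal.ofReal_mul (inv_nonneg.2 pi_pos.le), mul_inv, Real.sqrt_inv]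

lemma integral_chebMeasure1 (f : ℝ → ℝ) :
    ∫ x, f x ∂chebMeasure1 = π⁻¹ * ∫ x, f x ∂measureT := by
  rw [chebMeasure1_eq_smul_measureT, integral_smul_measure,
    ENNReal.toReal_ofReal (inv_nonneg.2 pi_pos.le), smul_eq_mul]

lemma integral_T1_mul_T1 (j k : ℕ) :
    ∫ x, T1 j x * T1 k x ∂chebMeasure1 = if j = k then (if k = 0 then 1 else 2⁻¹) else 0 := by
  rw [integral_chebMeasure1]
  unfold T1
  split_ifs with hjk hk
  · subst hjk hk
    rw [Nat.cast_zero, integral_eval_T_real_mul_self_measureT_zero, inv_mul_cancel₀ pi_ne_zero]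
  · subst hjk
    rw [integral_T_real_mul_self_measureT_of_ne_zero hk]
    field_simp
  · rw [integral_eval_T_real_mul_eval_T_real_measureT_of_ne hjk, mul_zero]

instance : IsProbabilityMeasure chebMeasure1 := by
  have h : ∫ x, T1 0 x * T1 0 x ∂chebMeasure1 = 1 := integral_T1_mul_T1 0 0
  simp only [T1, Nat.cast_zero, T_zero, Polynomial.eval_one, mul_one, integral_const,
    smul_eq_mul, measureReal_def] at h
  exact ⟨ENNReal.toReal_eq_one_iff _ |>.1 h⟩

instance (n : ℕ) : IsProbabilityMeasure (chebMeasure n) := by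
  unfold chebMeasure; infer_instance

lemma chebMeasure_restrict_box (n : ℕ) :
    (chebMeasure n).restrict (_root_.box n) = chebMeasure n := by
  have h : chebMeasure1.restrict (Set.Icc (-1) 1) = chebMeasure1 := by
    rw [chebMeasure1, restrict_withDensity measurableSet_Icc,
      Measure.restrict_restrict_of_subset subset_rfl]
  rw [chebMeasure, _root_.box, Measure.restrict_pi_pi, h]

lemma ContinuousOn.integrable_chebMeasure {n : ℕ} {f : (Fin n → ℝ) → ℝ}
    (hf : ContinuousOn f (_root_.box n)) : Integrable f (chebMeasure n) := by
  rw [← chebMeasure_restrict_box]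
  exact hf.integrableOn_compact (isCompact_univ_pi fun _ => isCompact_Icc)

@[fun_prop]
lemma continuous_Tm {n : ℕ} (α : Fin n → ℕ) : Continuous (Tm α) := by
  unfold Tm T1; fun_prop

lemma Tm_zero {n : ℕ} (x : Fin n → ℝ) : Tm 0 x = 1 := by
  simp [Tm, T1]

lemma Tm_single {n : ℕ} (i : Fin n) (x : Fin n → ℝ) : Tm (Pi.single i 1) x = x i := by
  rw [Tm, Fintype.prod_eq_single i fun j hj => by simp [T1, hj]]
  simp [T1]

lemma ham_zero {n : ℕ} : ham (0 : Fin n → ℕ) = 0 := by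
  simp [ham]

lemma ham_single {n : ℕ} (i : Fin n) : ham (Pi.single i 1 : Fin n → ℕ) = 1 := by
  rw [ham, Finset.card_eq_one]
  exact ⟨i, by ext j; simp [Pi.single_apply]⟩

lemma integral_Tm_mul_Tm {n : ℕ} (α β : Fin n → ℕ) :
    ∫ x, Tm α x * Tm β x ∂chebMeasure n = if α = β then 2⁻¹ ^ ham α else 0 := by
  simp_rw [Tm, ← Finset.prod_mul_distrib]
  rw [chebMeasure, integral_fintype_prod_eq_prod (fun i t => T1 (α i) t * T1 (β i) t)]
  simp_rw [integral_T1_mul_T1]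
  rw [Finset.prod_ite_zero]
  by_cases h : α = β
  · subst h
    rw [if_pos fun _ _ => rfl, if_pos rfl, Finset.prod_ite, Finset.prod_const_one, one_mul,
      Finset.prod_const, ham]
  · rw [if_neg fun h' => h (funext fun i => h' i (mem_univ i)), if_neg h]

lemma integral_Tm {n : ℕ} (α : Fin n → ℕ) :
    ∫ x, Tm α x ∂chebMeasure n = if α = 0 then 1 else 0 := by
  simpa [Tm_zero, ham_zero, eq_comm] using integral_Tm_mul_Tm 0 α

lemma integral_apply_mul_Tm {n : ℕ} (i : Fin n) (α : Fin n → ℕ) :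
    ∫ x, x i * Tm α x ∂chebMeasure n = if α = Pi.single i 1 then 2⁻¹ else 0 := by
  simpa [Tm_single, ham_single, eq_comm] using integral_Tm_mul_Tm (Pi.single i 1) α

lemma integral_apply_sq {n : ℕ} (i : Fin n) : ∫ x, x i ^ 2 ∂chebMeasure n = 2⁻¹ := by
  simpa [Tm_single, ham_single, sq] using integral_Tm_mul_Tm (Pi.single i 1) (Pi.single i 1)

lemma sq_sub_mul_mul_eq {X : Type*} (u f : X → ℝ) :
    (fun z : X × X => (u z.1 - u z.2) ^ 2 * (f z.1 * f z.2)) = fun z =>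
      u z.1 ^ 2 * f z.1 * f z.2 - 2 * ((u z.1 * f z.1) * (u z.2 * f z.2)) +
        f z.1 * (u z.2 ^ 2 * f z.2) := by
  funext z; ring

section SquaredDifference

variable {X : Type*} [MeasurableSpace X] {μ : Measure X} {u f : X → ℝ}

lemma integrable_prod_sq_sub_mul_mul (hf : Integrable f μ)
    (huf : Integrable (fun x => u x * f x) μ) (hu2f : Integrable (fun x => u x ^ 2 * f x) μ) :
    Integrable (fun z : X × X => (u z.1 - u z.2) ^ 2 * (f z.1 * f z.2)) (μ.prod μ) := by
  rw [sq_sub_mul_mul_eq]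
  exact ((hu2f.mul_prod hf).sub ((huf.mul_prod huf).const_mul 2)).add (hf.mul_prod hu2f)

lemma integral_prod_sq_sub_mul_mul [SFinite μ] (hf : Integrable f μ)
    (huf : Integrable (fun x => u x * f x) μ) (hu2f : Integrable (fun x => u x ^ 2 * f x) μ) :
    ∫ z, (u z.1 - u z.2) ^ 2 * (f z.1 * f z.2) ∂(μ.prod μ) =
      2 * ((∫ x, u x ^ 2 * f x ∂μ) * (∫ x, f x ∂μ) - (∫ x, u x * f x ∂μ) ^ 2) := by
  have h₁ : Integrable (fun z : X × X => u z.1 ^ 2 * f z.1 * f z.2) (μ.prod μ) :=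
    hu2f.mul_prod hf
  have h₂ : Integrable (fun z : X × X => 2 * ((u z.1 * f z.1) * (u z.2 * f z.2))) (μ.prod μ) :=
    (huf.mul_prod huf).const_mul 2
  have h₁₂ : Integrable (fun z : X × X =>
      u z.1 ^ 2 * f z.1 * f z.2 - 2 * ((u z.1 * f z.1) * (u z.2 * f z.2))) (μ.prod μ) :=
    h₁.sub h₂
  rw [sq_sub_mul_mul_eq, integral_add h₁₂ (hf.mul_prod hu2f), integral_sub h₁ h₂,
    integral_const_mul, integral_prod_mul (fun x => u x ^ 2 * f x) f,
    integral_prod_mul (fun x => u x * f x) (fun x => u x * f x),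
    integral_prod_mul f (fun x => u x ^ 2 * f x)]
  ring

end SquaredDifference

section SquaredDifferenceTm

variable {n : ℕ} (i : Fin n) (α : Fin n → ℕ)

lemma integrable_prod_sq_sub_mul_Tm :
    Integrable (fun z : (Fin n → ℝ) × (Fin n → ℝ) => (z.1 i - z.2 i) ^ 2 * (Tm α z.1 * Tm α z.2))
      ((chebMeasure n).prod (chebMeasure n)) := by
  have hf : Integrable (Tm α) (chebMeasure n) := ContinuousOn.integrable_chebMeasure (by fun_prop)
  have huf : Integrable (fun x : Fin n → ℝ => x i * Tm α x) (chebMeasure n) :=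
    ContinuousOn.integrable_chebMeasure (by fun_prop)
  have hu2f : Integrable (fun x : Fin n → ℝ => x i ^ 2 * Tm α x) (chebMeasure n) :=
    ContinuousOn.integrable_chebMeasure (by fun_prop)
  exact integrable_prod_sq_sub_mul_mul (u := fun x => x i) hf huf hu2f

lemma integral_prod_sq_sub_mul_Tm :
    ∫ z, (z.1 i - z.2 i) ^ 2 * (Tm α z.1 * Tm α z.2) ∂((chebMeasure n).prod (chebMeasure n)) =
      (if α = 0 then 1 else 0) - (if α = Pi.single i 1 then 2⁻¹ else 0) := by
  have hf : Integrable (Tm α) (chebMeasure n) := ContinuousOn.integrable_chebMeasure (by fun_prop)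
  have huf : Integrable (fun x : Fin n → ℝ => x i * Tm α x) (chebMeasure n) :=
    ContinuousOn.integrable_chebMeasure (by fun_prop)
  have hu2f : Integrable (fun x : Fin n → ℝ => x i ^ 2 * Tm α x) (chebMeasure n) :=
    ContinuousOn.integrable_chebMeasure (by fun_prop)
  rw [integral_prod_sq_sub_mul_mul (u := fun x => x i) hf huf hu2f, integral_Tm,
    integral_apply_mul_Tm]
  split_ifs with h0 hi hi
  · exact absurd (h0 ▸ hi).symm (by simp)
  · simp [h0, Tm_zero, integral_apply_sq]
  · norm_num
  · norm_num

end SquaredDifferenceTm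

/-- The paper's `K_r` is `chebKernel (Nnr n r) fun α => 2 ^ ham α * g α`. -/
def chebKernel {n : ℕ} (S : Finset (Fin n → ℕ)) (c : (Fin n → ℕ) → ℝ) (x y : Fin n → ℝ) : ℝ :=
  ∑ α ∈ S, c α * Tm α x * Tm α y

section Kernel

variable {n : ℕ} {S : Finset (Fin n → ℕ)} (c : (Fin n → ℕ) → ℝ)

lemma integral_chebKernel (h0 : 0 ∈ S) (x : Fin n → ℝ) :
    ∫ y, chebKernel S c x y ∂chebMeasure n = c 0 := by
  unfold chebKernel
  rw [integral_finsetSum _ fun α _ => ContinuousOn.integrable_chebMeasure (by fun_prop)]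
  simp_rw [integral_const_mul, integral_Tm, mul_ite, mul_zero, Finset.sum_ite_eq' S 0, if_pos h0,
    Tm_zero, mul_one]

lemma sq_sub_mul_chebKernel (i : Fin n) (x y : Fin n → ℝ) :
    (x i - y i) ^ 2 * chebKernel S c x y =
      ∑ α ∈ S, c α * ((x i - y i) ^ 2 * (Tm α x * Tm α y)) := by
  rw [chebKernel, Finset.mul_sum]
  exact Finset.sum_congr rfl fun α _ => by ring

lemma integrable_prod_sq_sub_mul_chebKernel (i : Fin n) :
    Integrable (fun z : (Fin n → ℝ) × (Fin n → ℝ) => (z.1 i - z.2 i) ^ 2 * chebKernel S c z.1 z.2)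
      ((chebMeasure n).prod (chebMeasure n)) := by
  simp_rw [sq_sub_mul_chebKernel]
  exact integrable_finsetSum _ fun α _ => (integrable_prod_sq_sub_mul_Tm i α).const_mul _

lemma integral_prod_sq_sub_mul_chebKernel (i : Fin n) (h0 : 0 ∈ S)
    (hi : Pi.single i 1 ∈ S) :
    ∫ z, (z.1 i - z.2 i) ^ 2 * chebKernel S c z.1 z.2 ∂((chebMeasure n).prod (chebMeasure n)) =
      c 0 - c (Pi.single i 1) / 2 := by
  simp_rw [sq_sub_mul_chebKernel]
  rw [integral_finsetSum _ fun α _ => (integrable_prod_sq_sub_mul_Tm i α).const_mul _]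
  simp_rw [integral_const_mul, integral_prod_sq_sub_mul_Tm, mul_sub, mul_ite, mul_zero,
    Finset.sum_sub_distrib, Finset.sum_ite_eq' S, if_pos h0, if_pos hi]
  ring

lemma integral_integral_eNorm_sq_mul_chebKernel (h0 : 0 ∈ S) (hS : ∀ i, Pi.single i 1 ∈ S) :
    ∫ x, ∫ y, eNorm (x - y) ^ 2 * chebKernel S c x y ∂chebMeasure n ∂chebMeasure n =
      ∑ i, (c 0 - c (Pi.single i 1) / 2) := by
  have hsum : ∀ x y : Fin n → ℝ,
      eNorm (x - y) ^ 2 * chebKernel S c x y = ∑ i, (x i - y i) ^ 2 * chebKernel S c x y := by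
    intro x y
    rw [eNorm, sq_sqrt (by positivity), Finset.sum_mul]
    rfl
  simp_rw [hsum]
  rw [integral_integral (integrable_finsetSum _ fun i _ =>
      integrable_prod_sq_sub_mul_chebKernel c i),
    integral_finsetSum _ fun i _ => integrable_prod_sq_sub_mul_chebKernel c i]
  exact Finset.sum_congr rfl fun i _ => integral_prod_sq_sub_mul_chebKernel c i h0 (hS i)

end Kernel

lemma zero_mem_Nnr (n r : ℕ) : (0 : Fin n → ℕ) ∈ Nnr n r := by
  simp [Nnr, Fintype.mem_piFinset]

lemma single_mem_Nnr {n r : ℕ} (hr : 1 ≤ r) (i : Fin n) :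
    (Pi.single i 1 : Fin n → ℕ) ∈ Nnr n r := by
  simp only [Nnr, mem_filter, Fintype.mem_piFinset, mem_range, Finset.sum_pi_single', mem_univ,
    if_true]
  exact ⟨fun j => by rw [Pi.single_apply]; split_ifs <;> omega, hr⟩

/-- For a kernel with coefficients 2^{H(α)} g_α and g₀ = 1, the kernel
is normalized, and its squared resolution equals Σᵢ (1 − g_{eᵢ}). -/
theorem kernel_normalized_and_resolution (n r : ℕ) (hr : 1 ≤ r)
    (g : (Fin n → ℕ) → ℝ) (hg0 : g 0 = 1)
    (K : (Fin n → ℝ) → (Fin n → ℝ) → ℝ)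
    (hK : ∀ x y, K x y = ∑ α ∈ Nnr n r, (2 : ℝ) ^ ham α * g α * Tm α x * Tm α y) :
    (∀ x, ∫ y, K x y ∂(chebMeasure n) = 1) ∧
      ∫ x, ∫ y, eNorm (x - y) ^ 2 * K x y ∂(chebMeasure n) ∂(chebMeasure n) =
        ∑ i : Fin n, (1 - g (Pi.single i 1)) := by
  obtain rfl : K = chebKernel (Nnr n r) fun α => 2 ^ ham α * g α := funext₂ hK
  refine ⟨fun x => ?_, ?_⟩
  · rw [integral_chebKernel _ (zero_mem_Nnr n r), ham_zero, hg0, pow_zero, mul_one]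
  · rw [integral_integral_eNorm_sq_mul_chebKernel _ (zero_mem_Nnr n r) (single_mem_Nnr hr)]
    simp only [ham_zero, ham_single, hg0, pow_zero, pow_one, one_mul,
      mul_div_cancel_left₀ _ (two_ne_zero' ℝ)]
end
end
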